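/- Let L ≥ 3, N a positive integer, σ_w, σ_b > 0 with 0 < σ_w² < 1, and r* = √(N σ_b²/(1 − σ_w²)). Define the ring energy ℒ: (0,∞)^L → ℝ by ℒ(r_0,…,r_{L-1}) = (1/2) Σ_{l=0}^{L-1} [ r_l²/(σ_w² r_{l-1}²/N + σ_b²) − N log( r_l²/(σ_w² r_l²/N + σ_b²) ) ] with indices modulo L. Then the uniform configuration (r*, …, r*) is a strict local minimum of ℒ: there exists δ > 0 such that ℒ(r) > ℒ(r*,…,r*) for all r in the δ-ball around (r*,…,r*) with r ≠ (r*,…,r*). -/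
import Mathlib


set_option maxHeartbeats 1000000

/-- For the linear stochastic network on a ring of depth `L ≥ 3` and width `N`,
with `0 < σ_w² < 1` and `r* = √(N σ_b²/(1 − σ_w²))`, the uniform configuration `(r*, …, r*)`
is a strict local minimum of the ring energy `ℒ`. -/
theorem linear_ring_uniform_strict_local_min
    (L : ℕ) (hL : 3 ≤ L) (N : ℕ) (hN : 0 < N)
    (σw σb : ℝ) (hσw : 0 < σw ^ 2) (hσw1 : σw ^ 2 < 1) (hσb : 0 < σb)
    (rs : ℝ) (hrs : rs = Real.sqrt (N * σb ^ 2 / (1 - σw ^ 2)))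
    (ℒ : (Fin L → ℝ) → ℝ)
    (hℒ : ∀ r : Fin L → ℝ, ℒ r = (1 / 2) * ∑ l : Fin L,
      (r l ^ 2 / (σw ^ 2 * r (l - ⟨1, by omega⟩) ^ 2 / N + σb ^ 2) -
        N * Real.log (r l ^ 2 / (σw ^ 2 * r l ^ 2 / N + σb ^ 2)))) :
    ∃ δ > 0, ∀ r : Fin L → ℝ,
      dist r (fun _ => rs) < δ → r ≠ (fun _ => rs) → ℒ (fun _ => rs) < ℒ r := by
  haveI : NeZero L := ⟨by omega⟩
  have hΔ : 0 < 1 - σw ^ 2 := by linarith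
  have hNR : (0:ℝ) < N := by exact_mod_cast hN
  set xs : ℝ := N * σb ^ 2 / (1 - σw ^ 2) with hxs_def
  have hxs : 0 < xs := by positivity
  have hrs2 : rs ^ 2 = xs := by
    rw [hrs]; exact Real.sq_sqrt hxs.le
  have hrspos : 0 < rs := by
    rw [hrs]; exact Real.sqrt_pos.mpr hxs
  -- fixed point identity
  have hfix : xs = σw ^ 2 * xs + N * σb ^ 2 := by
    rw [hxs_def]; field_simp; ring
  -- value of the ratio at the fixed point
  have hNval : xs / (σw ^ 2 * xs / N + σb ^ 2) = N := by
    rw [hxs_def]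
    rw [div_eq_iff]
    · field_simp
      ring
    · have : σw ^ 2 * (N * σb ^ 2 / (1 - σw ^ 2)) / N ≥ 0 := by positivity
      positivity
  -- per-term inequality
  have hterm : ∀ c : ℝ, 0 < c → (N:ℝ) - N * Real.log N ≤ c - N * Real.log c := by
    intro c hc
    have h := Real.log_le_sub_one_of_pos (show 0 < c / N by positivity)
    rw [Real.log_div hc.ne' hNR.ne'] at h
    have : Real.log c - Real.log N ≤ c / N - 1 := h
    have h2 : N * (Real.log c - Real.log N) ≤ N * (c / N - 1) :=
      mul_le_mul_of_nonneg_left this hNR.le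
    have h3 : N * (c / N - 1) = c - N := by field_simp
    linarith
  have htermlt : ∀ c : ℝ, 0 < c → c ≠ N → (N:ℝ) - N * Real.log N < c - N * Real.log c := by
    intro c hc hcN
    have hcN' : c / N ≠ 1 := by
      intro h
      apply hcN
      field_simp at h
      exact h
    have h := Real.log_lt_sub_one_of_pos (show 0 < c / N by positivity) hcN'
    rw [Real.log_div hc.ne' hNR.ne'] at h
    have h2 : N * (Real.log c - Real.log N) < N * (c / N - 1) :=
      mul_lt_mul_of_pos_left h hNR
    have h3 : N * (c / N - 1) = c - N := by field_simp
    linarith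
  set one : Fin L := ⟨1, by omega⟩ with hone
  refine ⟨rs, hrspos, fun r hdist hne => ?_⟩
  have hpos : ∀ l, 0 < r l := by
    intro l
    have h := (dist_pi_lt_iff hrspos).mp hdist l
    rw [Real.dist_eq] at h
    have := abs_lt.mp h
    linarith [this.1]
  -- abbreviations
  set x : Fin L → ℝ := fun l => r l ^ 2 with hx
  have hxpos : ∀ l, 0 < x l := fun l => by
    simp only [hx]; exact pow_pos (hpos l) 2
  set d : Fin L → ℝ := fun l => σw ^ 2 * x (l - one) / N + σb ^ 2 with hd
  set e : Fin L → ℝ := fun l => σw ^ 2 * x l / N + σb ^ 2 with he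
  have hσb2 : 0 < σb ^ 2 := by positivity
  have hdpos : ∀ l, 0 < d l := by
    intro l
    have h1 : 0 ≤ σw ^ 2 * x (l - one) / N :=
      div_nonneg (mul_nonneg hσw.le (hxpos _).le) hNR.le
    simp only [hd]
    linarith
  have hepos : ∀ l, 0 < e l := by
    intro l
    have h1 : 0 ≤ σw ^ 2 * x l / N :=
      div_nonneg (mul_nonneg hσw.le (hxpos _).le) hNR.le
    simp only [he]
    linarith
  set c : Fin L → ℝ := fun l => x l / d l with hc
  have hcpos : ∀ l, 0 < c l := fun l => div_pos (hxpos l) (hdpos l)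
  -- telescoping: sum of log e (l - one) = sum of log e l
  have hshift : ∑ l : Fin L, Real.log (e (l - one)) = ∑ l : Fin L, Real.log (e l) := by
    exact Fintype.sum_equiv (Equiv.subRight one) _ _ (fun l => rfl)
  -- rewrite ℒ r
  have hLr : ℒ r = (1/2) * ∑ l : Fin L, (c l - N * Real.log (c l)) := by
    rw [hℒ r]
    congr 1
    have h1 : ∀ l : Fin L,
        r l ^ 2 / (σw ^ 2 * r (l - ⟨1, by omega⟩) ^ 2 / N + σb ^ 2) -
          N * Real.log (r l ^ 2 / (σw ^ 2 * r l ^ 2 / N + σb ^ 2)) =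
        c l - N * (Real.log (x l) - Real.log (e l)) := by
      intro l
      have : r l ^ 2 / (σw ^ 2 * r l ^ 2 / N + σb ^ 2) = x l / e l := rfl
      rw [this, Real.log_div (hxpos l).ne' (hepos l).ne']
    have h2 : ∀ l : Fin L, c l - N * Real.log (c l) =
        c l - N * (Real.log (x l) - Real.log (e (l - one))) := by
      intro l
      have : c l = x l / e (l - one) := rfl
      rw [this, Real.log_div (hxpos l).ne' (hepos (l - one)).ne']
    calc ∑ l : Fin L, (r l ^ 2 / (σw ^ 2 * r (l - ⟨1, by omega⟩) ^ 2 / N + σb ^ 2) -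
          N * Real.log (r l ^ 2 / (σw ^ 2 * r l ^ 2 / N + σb ^ 2)))
        = ∑ l : Fin L, (c l - N * (Real.log (x l) - Real.log (e l))) := by
          exact Finset.sum_congr rfl (fun l _ => h1 l)
      _ = ∑ l : Fin L, (c l - N * (Real.log (x l) - Real.log (e (l - one)))) := by
          rw [Finset.sum_sub_distrib, Finset.sum_sub_distrib, ← Finset.mul_sum,
            ← Finset.mul_sum, Finset.sum_sub_distrib, Finset.sum_sub_distrib, hshift]
      _ = ∑ l : Fin L, (c l - N * Real.log (c l)) := by
          exact Finset.sum_congr rfl (fun l _ => (h2 l).symm)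
  -- value at uniform
  have hLu : ℒ (fun _ => rs) = (1/2) * ∑ _l : Fin L, ((N:ℝ) - N * Real.log N) := by
    rw [hℒ]
    congr 1
    apply Finset.sum_congr rfl
    intro l _
    have : rs ^ 2 / (σw ^ 2 * rs ^ 2 / N + σb ^ 2) = (N:ℝ) := by rw [hrs2]; exact hNval
    rw [this]
  -- there is a strict term
  have hexists : ∃ l : Fin L, c l ≠ N := by
    by_contra hall
    push_neg at hall
    apply hne
    have hrec : ∀ l : Fin L, x l - xs = σw ^ 2 * (x (l - one) - xs) := by
      intro l
      have h := hall l
      have hxl : x l = N * d l := by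
        have := (div_eq_iff (hdpos l).ne').mp h
        linarith [this]
      have hdl : N * d l = σw ^ 2 * x (l - one) + N * σb ^ 2 := by
        simp only [hd]
        field_simp
      nlinarith [hfix]
    -- contraction argument
    obtain ⟨l₀, -, hmax⟩ := Finset.exists_max_image Finset.univ
      (fun l => |x l - xs|) ⟨⟨0, by omega⟩, Finset.mem_univ _⟩
    have hM0 : ∀ l, |x l - xs| = 0 := by
      have hM : |x l₀ - xs| ≤ σw ^ 2 * |x l₀ - xs| := by
        calc |x l₀ - xs| = σw ^ 2 * |x (l₀ - one) - xs| := by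
              rw [hrec l₀, abs_mul, abs_of_pos hσw]
          _ ≤ σw ^ 2 * |x l₀ - xs| :=
              mul_le_mul_of_nonneg_left (hmax _ (Finset.mem_univ _)) hσw.le
      have hMz : |x l₀ - xs| = 0 := by
        nlinarith [abs_nonneg (x l₀ - xs)]
      intro l
      have := hmax l (Finset.mem_univ l)
      have := abs_nonneg (x l - xs)
      linarith
    funext l
    have hxl : x l = xs := by
      have := hM0 l
      have := abs_eq_zero.mp this
      linarith
    have : r l ^ 2 = rs ^ 2 := by rw [hrs2]; exact hxl
    nlinarith [hpos l, hrspos]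
  obtain ⟨l₁, hl₁⟩ := hexists
  rw [hLr, hLu]
  have hsum : ∑ _l : Fin L, ((N:ℝ) - N * Real.log N) <
      ∑ l : Fin L, (c l - N * Real.log (c l)) := by
    apply Finset.sum_lt_sum
    · intro i _
      exact hterm (c i) (hcpos i)
    · exact ⟨l₁, Finset.mem_univ _, htermlt (c l₁) (hcpos l₁) hl₁⟩
  linarith
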